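/- For any real m×n matrix M, if W₁ ∈ ℝ^{m×m} and W₂ ∈ ℝ^{n×n} are symmetric matrices such that the block matrix [[W₁, M], [Mᵀ, W₂]] is positive semidefinite, then (trace(W₁) + trace(W₂))/2 ≥ ‖M‖_*. -/

import Mathlib

/-!
If `Q` is a contraction (`1 - Qᵀ Q ⪰ 0`), then `Z = [[1, -Q], [-Qᵀ, 1]] ⪰ 0` by a Schur
complement, so `0 ≤ tr (Y Z) = tr W₁ + tr W₂ - 2 tr (Qᵀ M)`. The contraction
`Q = M (MᵀM)^{-1/2}` gives `Qᵀ M = (MᵀM)^{1/2}`, whose trace is the nuclear norm. The inverse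
square root is `cfc (fun x => (√x)⁻¹)`, which vanishes on the kernel of `MᵀM` since `0⁻¹ = 0`;
no invertibility is needed because `(√x)⁻¹ * x = √x` and `√x * (√x)⁻¹ ≤ 1` for every real `x`.
-/

open Matrix

/-- The nuclear norm of a real matrix: the sum of its singular values,
computed as the trace of the positive semidefinite square root of `Mᵀ * M`. -/
noncomputable def nuclearNorm {m n : ℕ} (M : Matrix (Fin m) (Fin n) ℝ) : ℝ :=
  ((Matrix.posSemidef_conjTranspose_mul_self M).1.eigenvectorUnitary.1 *
    diagonal ((RCLike.ofReal : ℝ → ℝ) ∘ Real.sqrt ∘ (Matrix.posSemidef_conjTranspose_mul_self M).1.eigenvalues) *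
    (star (Matrix.posSemidef_conjTranspose_mul_self M).1.eigenvectorUnitary :
      Matrix (Fin n) (Fin n) ℝ)).trace

open scoped MatrixOrder ComplexOrder

namespace Matrix

variable {𝕜 ι κ : Type*} [RCLike 𝕜] [Fintype ι] [Fintype κ]

theorem trace_fromBlocks {R : Type*} [AddCommMonoid R] (A : Matrix ι ι R) (B : Matrix ι κ R)
    (C : Matrix κ ι R) (D : Matrix κ κ R) : (fromBlocks A B C D).trace = A.trace + D.trace := by
  simp [trace, Fintype.sum_sum_type]

theorem PosSemidef.trace_mul_nonneg [DecidableEq ι] {A B : Matrix ι ι 𝕜}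
    (hA : A.PosSemidef) (hB : B.PosSemidef) : 0 ≤ (A * B).trace := by
  obtain ⟨C, rfl⟩ := CStarAlgebra.nonneg_iff_eq_star_mul_self.mp hB.nonneg
  rw [← Matrix.mul_assoc, trace_mul_cycle]
  exact (hA.mul_mul_conjTranspose_same C).trace_nonneg

theorem posSemidef_fromBlocks_one_iff [DecidableEq ι] [DecidableEq κ] (Q : Matrix ι κ 𝕜) :
    (fromBlocks 1 Q Qᴴ 1).PosSemidef ↔ (1 - Qᴴ * Q).PosSemidef := by
  let : Invertible (1 : Matrix ι ι 𝕜) := invertibleOne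
  rw [PosDef.fromBlocks₁₁ Q 1 PosDef.one, inv_one, Matrix.mul_one]

theorem exists_contraction_conjTranspose_mul_eq_cfc_sqrt [DecidableEq κ] (M : Matrix ι κ 𝕜) :
    ∃ Q : Matrix ι κ 𝕜, (1 - Qᴴ * Q).PosSemidef ∧ Qᴴ * M = cfc Real.sqrt (Mᴴ * M) := by
  set H := Mᴴ * M
  have hH : H.PosSemidef := posSemidef_conjTranspose_mul_self M
  have hcont (f : ℝ → ℝ) : ContinuousOn f (spectrum ℝ H) := H.finite_real_spectrum.continuousOn f
  set P := cfc (fun x => (√x)⁻¹) H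
  have hP : Pᴴ = P := (cfc_predicate _ H : IsSelfAdjoint P)
  have hPH : P * H = cfc Real.sqrt H :=
    calc P * H = cfc (fun x => (√x)⁻¹ * x) H := by
          rw [cfc_mul _ _ H (hcont _) (hcont _), cfc_id' ℝ H]
      _ = cfc Real.sqrt H := cfc_congr fun x _ => (inv_mul_eq_div _ _).trans Real.div_sqrt
  refine ⟨M * P, ?_, ?_⟩
  · have hQQ : (M * P)ᴴ * (M * P) = cfc (fun x => √x * (√x)⁻¹) H := by
      rw [conjTranspose_mul, hP, Matrix.mul_assoc, ← Matrix.mul_assoc Mᴴ, ← Matrix.mul_assoc, hPH,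
        cfc_mul _ _ H (hcont _) (hcont _)]
    rw [hQQ, ← cfc_const_one ℝ H, ← cfc_sub (hf := hcont _) (hg := hcont _),
      ← nonneg_iff_posSemidef]
    exact cfc_nonneg fun x _ => sub_nonneg.2 mul_inv_le_one
  · rw [conjTranspose_mul, hP, Matrix.mul_assoc, ← hPH]

theorem two_mul_trace_transpose_mul_le_of_posSemidef_fromBlocks [DecidableEq ι] [DecidableEq κ]
    {W₁ : Matrix ι ι ℝ} {W₂ : Matrix κ κ ℝ} {M Q : Matrix ι κ ℝ}
    (hY : (fromBlocks W₁ M Mᵀ W₂).PosSemidef) (hQ : (1 - Qᵀ * Q).PosSemidef) :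
    2 * (Qᵀ * M).trace ≤ W₁.trace + W₂.trace := by
  have hZ : (fromBlocks 1 (-Q) (-Q)ᵀ 1).PosSemidef :=
    (posSemidef_fromBlocks_one_iff (-Q)).2 (by simpa using hQ)
  have hYZ : (fromBlocks W₁ M Mᵀ W₂ * fromBlocks 1 (-Q) (-Q)ᵀ 1).trace =
      W₁.trace + W₂.trace - 2 * (Qᵀ * M).trace := by
    have hMQ : (Mᵀ * Q).trace = (Qᵀ * M).trace := by
      rw [← trace_transpose, transpose_mul, transpose_transpose]
    simp only [fromBlocks_multiply, trace_fromBlocks, trace_add, Matrix.mul_one, transpose_neg,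
      Matrix.mul_neg, trace_neg, trace_mul_comm M, hMQ]
    ring
  linarith [hY.trace_mul_nonneg hZ]

end Matrix

theorem nuclearNorm_eq_trace_cfc_sqrt {m n : ℕ} (M : Matrix (Fin m) (Fin n) ℝ) :
    nuclearNorm M = (cfc Real.sqrt (Mᴴ * M)).trace := by
  rw [(posSemidef_conjTranspose_mul_self M).1.cfc_eq, IsHermitian.cfc]
  rfl

theorem half_trace_ge_nuclearNorm_general (m n : ℕ) (M : Matrix (Fin m) (Fin n) ℝ)
    (W₁ : Matrix (Fin m) (Fin m) ℝ) (W₂ : Matrix (Fin n) (Fin n) ℝ)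
    (hY : (fromBlocks W₁ M Mᵀ W₂).PosSemidef) :
    (W₁.trace + W₂.trace) / 2 ≥ nuclearNorm M := by
  obtain ⟨Q, hQ, hQM⟩ := exists_contraction_conjTranspose_mul_eq_cfc_sqrt M
  rw [conjTranspose_eq_transpose_of_trivial] at hQ hQM
  have hle := two_mul_trace_transpose_mul_le_of_posSemidef_fromBlocks hY hQ
  rw [nuclearNorm_eq_trace_cfc_sqrt, ← hQM]
  linarith

theorem half_trace_ge_nuclearNorm (m n : ℕ) (M : Matrix (Fin m) (Fin n) ℝ)
    (W₁ : Matrix (Fin m) (Fin m) ℝ) (W₂ : Matrix (Fin n) (Fin n) ℝ)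
    (hW₁ : W₁.IsSymm) (hW₂ : W₂.IsSymm)
    (hY : (fromBlocks W₁ M Mᵀ W₂).PosSemidef) :
    (W₁.trace + W₂.trace) / 2 ≥ nuclearNorm M :=
  half_trace_ge_nuclearNorm_general m n M W₁ W₂ hY
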